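/- arXiv:1208.5435 — 5 statements merged into one kernel-verified Lean document; each statement's English description precedes it below -/
import Mathlib

section
/- Let A be a real m×n matrix and let k ≥ 1. Suppose the restricted isometry constant δ_{2k} of A satisfies δ_{2k} < 3/(4+√6), i.e. there exists δ < 3/(4+√6) such that (1−δ)‖x‖₂² ≤ ‖Ax‖₂² ≤ (1+δ)‖x‖₂² for every 2k-sparse vector x ∈ ℝⁿ. Then every k-sparse vector x ∈ ℝⁿ satisfying A x = b̂ is the unique solution of the basis pursuit problem min ‖y‖₁ subject to A y = b̂; that is, for every y ∈ ℝⁿ with A y = b̂ and y ≠ x one has ‖y‖₁ > ‖x‖₁. -/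
/-!
Let `h = y - x`, a nonzero vector in the kernel of `A`. It suffices to show the strict null
space property `‖h_S‖₁ < ‖h_Sᶜ‖₁` for every set `S` of at most `k` indices. Sort `|h|`
decreasingly and cut it into consecutive blocks `T₀, T₁, …` of `k` entries. If the property
failed, the tail blocks `T₂, T₃, …` would carry ℓ₁-mass at most `‖h_T₀‖₁ - ‖h_T₁‖₁`. The
sharpened block estimate `√k ‖v‖₂ ≤ ‖v‖₁ + k (max v - min v) / 4`, whose error terms telescope
along the sorted blocks, turns this into a bound on `∑_{j ≥ 2} ‖h_Tj‖₂`, while the RIP gives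
`(1 - δ) ‖h_{T₀ ∪ T₁}‖₂² ≤ -⟪A h_{T₀ ∪ T₁}, ∑_{j ≥ 2} A h_Tj⟫ ≤ δ (a + b) ∑_{j ≥ 2} ‖h_Tj‖₂`
with `a = ‖h_T₀‖₂`, `b = ‖h_T₁‖₂`. Together: `(1 - δ)(a² + b²) a ≤ δ (a + b)(a² - ¾ b²)`,
which is impossible when `δ < 3 / (4 + √6)`.
-/

open scoped BigOperators

/-- A vector `x : Fin n → ℝ` is `k`-sparse if it has at most `k` nonzero entries. -/
def IsSparse {n : ℕ} (k : ℕ) (x : Fin n → ℝ) : Prop :=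
  (Finset.univ.filter fun i => x i ≠ 0).card ≤ k

open Finset Matrix

namespace IsSparse

variable {n k l : ℕ} {x y : Fin n → ℝ}

theorem mono (hx : IsSparse k x) (hyx : ∀ i, y i ≠ 0 → x i ≠ 0) : IsSparse k y :=
  (card_le_card fun i hi => by simp_all).trans hx

theorem smul (hx : IsSparse k x) (a : ℝ) : IsSparse k (a • x) :=
  hx.mono fun _ hi => right_ne_zero_of_mul hi

theorem add (hx : IsSparse k x) (hy : IsSparse l y) : IsSparse (k + l) (x + y) := by
  refine (card_le_card fun i hi => ?_).trans ((card_union_le _ _).trans (add_le_add hx hy))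
  simp only [mem_filter, mem_univ, true_and, mem_union, Pi.add_apply] at hi ⊢
  by_contra! h
  simp [h.1, h.2] at hi

end IsSparse

theorem isSparse_of_card_le {n k : ℕ} {x : Fin n → ℝ} {S : Finset (Fin n)} (hS : #S ≤ k)
    (hx : ∀ i ∉ S, x i = 0) : IsSparse k x :=
  (card_le_card fun i hi => by by_contra h; simp_all).trans hS

def HasRIP {m n : ℕ} (A : Matrix (Fin m) (Fin n) ℝ) (s : ℕ) (δ : ℝ) : Prop :=
  ∀ z : Fin n → ℝ, IsSparse s z →
    (1 - δ) * (z ⬝ᵥ z) ≤ A *ᵥ z ⬝ᵥ A *ᵥ z ∧ A *ᵥ z ⬝ᵥ A *ᵥ z ≤ (1 + δ) * (z ⬝ᵥ z)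

namespace HasRIP

variable {m n k l : ℕ} {A : Matrix (Fin m) (Fin n) ℝ} {δ : ℝ}

theorem abs_dotProduct_mulVec_le (hA : HasRIP A (k + l) δ) {u v : Fin n → ℝ}
    (hu : IsSparse k u) (hv : IsSparse l v) (huv : ∀ i, u i * v i = 0) :
    |A *ᵥ u ⬝ᵥ A *ᵥ v| ≤ δ * √(u ⬝ᵥ u) * √(v ⬝ᵥ v) := by
  have hu₀ : 0 ≤ u ⬝ᵥ u := sum_nonneg fun i _ => mul_self_nonneg (u i)
  have hv₀ : 0 ≤ v ⬝ᵥ v := sum_nonneg fun i _ => mul_self_nonneg (v i)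
  rcases (Real.sqrt_nonneg (u ⬝ᵥ u)).eq_or_lt with hα | hα
  · simp [dotProduct_self_eq_zero.1 (le_antisymm (Real.sqrt_eq_zero'.1 hα.symm) hu₀)]
  rcases (Real.sqrt_nonneg (v ⬝ᵥ v)).eq_or_lt with hβ | hβ
  · simp [dotProduct_self_eq_zero.1 (le_antisymm (Real.sqrt_eq_zero'.1 hβ.symm) hv₀)]
  set α := √(u ⬝ᵥ u)
  set β := √(v ⬝ᵥ v)
  have hα2 : u ⬝ᵥ u = α ^ 2 := (Real.sq_sqrt hu₀).symm
  have hβ2 : v ⬝ᵥ v = β ^ 2 := (Real.sq_sqrt hv₀).symm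
  have huv' : u ⬝ᵥ v = 0 := sum_eq_zero fun i _ => huv i
  -- polarization at the vectors `β • u ± α • v`, both of squared norm `2 α² β²`
  obtain ⟨hp₁, hp₂⟩ := hA _ ((hu.smul β).add (hv.smul α))
  obtain ⟨hm₁, hm₂⟩ := hA _ ((hu.smul β).add (hv.smul (-α)))
  simp only [mulVec_add, mulVec_smul, add_dotProduct, dotProduct_add, smul_dotProduct,
    dotProduct_smul, smul_eq_mul, dotProduct_comm v u, dotProduct_comm (A *ᵥ v) (A *ᵥ u),
    huv', hα2, hβ2] at hp₁ hp₂ hm₁ hm₂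
  rw [abs_le]
  constructor <;> nlinarith [mul_pos hα hβ]

theorem one_sub_mul_head_le (hA : HasRIP A (2 * k) δ) {w : ℕ → Fin n → ℝ}
    (hw : ∀ j, IsSparse k (w j)) (hdisj : ∀ j j', j ≠ j' → ∀ i, w j i * w j' i = 0)
    {N : ℕ} (hN : 2 ≤ N) (hker : A *ᵥ ∑ j ∈ range N, w j = 0) :
    (1 - δ) * (w 0 ⬝ᵥ w 0 + w 1 ⬝ᵥ w 1)
      ≤ δ * (√(w 0 ⬝ᵥ w 0) + √(w 1 ⬝ᵥ w 1)) * ∑ j ∈ Ico 2 N, √(w j ⬝ᵥ w j) := by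
  rw [two_mul] at hA
  have hAu : A *ᵥ (w 0 + w 1) = -∑ j ∈ Ico 2 N, A *ᵥ w j := by
    rw [← sum_range_add_sum_Ico _ hN] at hker
    simpa [sum_range_succ, mulVec_add, mulVec_sum, eq_neg_iff_add_eq_zero] using hker
  have h01 : w 0 ⬝ᵥ w 1 = 0 := sum_eq_zero fun i _ => hdisj 0 1 zero_ne_one i
  calc (1 - δ) * (w 0 ⬝ᵥ w 0 + w 1 ⬝ᵥ w 1)
      = (1 - δ) * ((w 0 + w 1) ⬝ᵥ (w 0 + w 1)) := by
        simp [add_dotProduct, dotProduct_add, dotProduct_comm (w 1), h01]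
    _ ≤ A *ᵥ (w 0 + w 1) ⬝ᵥ A *ᵥ (w 0 + w 1) := (hA _ ((hw 0).add (hw 1))).1
    _ = A *ᵥ (w 0 + w 1) ⬝ᵥ -∑ j ∈ Ico 2 N, A *ᵥ w j := by rw [← hAu]
    _ = ∑ j ∈ Ico 2 N, -(A *ᵥ w 0 ⬝ᵥ A *ᵥ w j + A *ᵥ w 1 ⬝ᵥ A *ᵥ w j) := by
        rw [dotProduct_neg, dotProduct_sum, ← sum_neg_distrib]
        simp only [mulVec_add, add_dotProduct]
    _ ≤ ∑ j ∈ Ico 2 N, δ * (√(w 0 ⬝ᵥ w 0) + √(w 1 ⬝ᵥ w 1)) * √(w j ⬝ᵥ w j) := by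
        refine sum_le_sum fun j hj => ?_
        have hj₀ : 0 ≠ j := by have := (mem_Ico.1 hj).1; omega
        have hj₁ : 1 ≠ j := by have := (mem_Ico.1 hj).1; omega
        have h₀ := hA.abs_dotProduct_mulVec_le (hw 0) (hw j) (hdisj 0 j hj₀)
        have h₁ := hA.abs_dotProduct_mulVec_le (hw 1) (hw j) (hdisj 1 j hj₁)
        linarith [neg_abs_le (A *ᵥ w 0 ⬝ᵥ A *ᵥ w j), neg_abs_le (A *ᵥ w 1 ⬝ᵥ A *ᵥ w j)]
    _ = _ := by rw [mul_sum]

end HasRIP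

def blockSum (c : ℕ → ℝ) (k j : ℕ) : ℝ := ∑ t ∈ Ico (j * k) ((j + 1) * k), c t

theorem card_Ico_mul_add_one_mul (k j : ℕ) : #(Ico (j * k) ((j + 1) * k)) = k := by
  rw [Nat.card_Ico, add_mul, one_mul, Nat.add_sub_cancel_left]

theorem sqrt_card_mul_sqrt_sum_sq_le {ι : Type*} {s : Finset ι} {f : ι → ℝ} {lo hi : ℝ}
    (hlo : 0 ≤ lo) (hlohi : lo ≤ hi) (hf : ∀ i ∈ s, f i ∈ Set.Icc lo hi) :
    √(#s : ℝ) * √(∑ i ∈ s, f i ^ 2) ≤ ∑ i ∈ s, f i + #s * (hi - lo) / 4 := by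
  set P := ∑ i ∈ s, f i
  set K : ℝ := ((#s : ℕ) : ℝ)
  have hP : K * lo ≤ P := by simpa using card_nsmul_le_sum s f lo fun i hi => (hf i hi).1
  -- `(f - lo)(hi - f) ≥ 0` bounds each square by a linear function of `f`
  have hsq : ∑ i ∈ s, f i ^ 2 ≤ (hi + lo) * P - K * (hi * lo) := by
    calc ∑ i ∈ s, f i ^ 2 ≤ ∑ i ∈ s, ((hi + lo) * f i - hi * lo) :=
          sum_le_sum fun i hi' => by nlinarith [(hf i hi').1, (hf i hi').2]
      _ = (hi + lo) * P - K * (hi * lo) := by simp [P, K, sum_sub_distrib, mul_sum]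
  have hK : 0 ≤ K := Nat.cast_nonneg _
  have hgap : 0 ≤ K * (hi - lo) := mul_nonneg hK (sub_nonneg.2 hlohi)
  rw [← Real.sqrt_mul hK, Real.sqrt_le_left (by nlinarith [mul_nonneg hK hlo])]
  nlinarith [sq_nonneg (P - K * (hi + 3 * lo) / 4), mul_le_mul_of_nonneg_left hsq hK,
    mul_nonneg (mul_nonneg hK hlo) hgap]

section Blocks

variable {c : ℕ → ℝ} {k j N : ℕ}

theorem Antitone.sum_le_sum_range (hc : Antitone c) (hc0 : 0 ≤ c) {U : Finset ℕ} (hU : #U ≤ k) :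
    ∑ t ∈ U, c t ≤ ∑ t ∈ range k, c t := by
  have hcard : #(U \ range k) ≤ #(range k \ U) := by
    have := card_sdiff_add_card_inter U (range k)
    have := card_sdiff_add_card_inter (range k) U
    rw [inter_comm, card_range] at this
    omega
  -- what `U` gains outside `range k` is at most `c k` per index, what it misses at least that
  have hout : ∑ t ∈ U \ range k, c t ≤ #(U \ range k) • c k :=
    sum_le_card_nsmul _ _ _ fun t ht => hc (by simpa using (mem_sdiff.1 ht).2)
  have hin : #(range k \ U) • c k ≤ ∑ t ∈ range k \ U, c t :=
    card_nsmul_le_sum _ _ _ fun t ht => hc (mem_range.1 (mem_sdiff.1 ht).1).le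
  have hmid : #(U \ range k) • c k ≤ #(range k \ U) • c k := nsmul_le_nsmul_left (hc0 k) hcard
  have hU' := sum_inter_add_sum_sdiff U (range k) c
  have hR' := sum_inter_add_sum_sdiff (range k) U c
  rw [inter_comm] at hR'
  linarith

theorem Antitone.card_mul_le_blockSum (hc : Antitone c) : k * c ((j + 1) * k) ≤ blockSum c k j := by
  have := card_nsmul_le_sum (Ico (j * k) ((j + 1) * k)) c _ fun t ht => hc (mem_Ico.1 ht).2.le
  rwa [card_Ico_mul_add_one_mul, nsmul_eq_mul] at this

theorem Antitone.blockSum_sq_le (hc : Antitone c) (hc0 : 0 ≤ c) :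
    blockSum (fun t => c t ^ 2) k j ≤ c (j * k) * blockSum c k j := by
  rw [blockSum, blockSum, mul_sum]
  exact sum_le_sum fun t ht => by
    rw [sq]; exact mul_le_mul_of_nonneg_right (hc (mem_Ico.1 ht).1) (hc0 t)

theorem sq_blockSum_le : blockSum c k j ^ 2 ≤ k * blockSum (fun t => c t ^ 2) k j := by
  have := sq_sum_le_card_mul_sum_sq (s := Ico (j * k) ((j + 1) * k)) (f := c)
  rwa [card_Ico_mul_add_one_mul] at this

theorem Antitone.sqrt_mul_sqrt_blockSum_sq_le (hc : Antitone c) (hc0 : 0 ≤ c) :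
    √(k : ℝ) * √(blockSum (fun t => c t ^ 2) k j)
      ≤ blockSum c k j + k * (c (j * k) - c ((j + 1) * k)) / 4 := by
  have hle : j * k ≤ (j + 1) * k := Nat.mul_le_mul_right _ j.le_succ
  have := sqrt_card_mul_sqrt_sum_sq_le (s := Ico (j * k) ((j + 1) * k)) (f := c) (hc0 _) (hc hle)
    fun t ht => ⟨hc (mem_Ico.1 ht).2.le, hc (mem_Ico.1 ht).1⟩
  rwa [card_Ico_mul_add_one_mul] at this

theorem Antitone.sqrt_mul_sum_sqrt_blockSum_sq_le (hc : Antitone c) (hc0 : 0 ≤ c) (hN : 2 ≤ N) :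
    √(k : ℝ) * ∑ j ∈ Ico 2 N, √(blockSum (fun t => c t ^ 2) k j)
      ≤ ∑ j ∈ Ico 2 N, blockSum c k j + k * c (2 * k) / 4 := by
  have htel : ∑ j ∈ Ico 2 N, (c (j * k) - c ((j + 1) * k)) = c (2 * k) - c (N * k) := by
    rw [← neg_sub, ← sum_Ico_sub (fun j => c (j * k)) hN, ← sum_neg_distrib]
    simp
  calc √(k : ℝ) * ∑ j ∈ Ico 2 N, √(blockSum (fun t => c t ^ 2) k j)
      ≤ ∑ j ∈ Ico 2 N, (blockSum c k j + k * (c (j * k) - c ((j + 1) * k)) / 4) := by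
        rw [mul_sum]; exact sum_le_sum fun j _ => hc.sqrt_mul_sqrt_blockSum_sq_le hc0
    _ = ∑ j ∈ Ico 2 N, blockSum c k j + k * (c (2 * k) - c (N * k)) / 4 := by
        rw [sum_add_distrib, ← sum_div, ← mul_sum, htel]
    _ ≤ _ := by nlinarith [mul_nonneg (Nat.cast_nonneg k) (hc0 (N * k))]

theorem Antitone.sqrt_blockSum_sq_mul_sum_le (hc : Antitone c) (hc0 : 0 ≤ c) (hk : 0 < k)
    (hN : 2 ≤ N) (htail : ∑ j ∈ Ico 1 N, blockSum c k j ≤ blockSum c k 0) :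
    √(blockSum (fun t => c t ^ 2) k 0) * ∑ j ∈ Ico 2 N, √(blockSum (fun t => c t ^ 2) k j)
      ≤ blockSum (fun t => c t ^ 2) k 0 - 3 / 4 * blockSum (fun t => c t ^ 2) k 1 := by
  set p := blockSum c k
  set Q := blockSum (fun t => c t ^ 2) k
  set S := ∑ j ∈ Ico 2 N, √(Q j)
  have hk' : (0 : ℝ) < k := Nat.cast_pos.2 hk
  have hsk : 0 < √(k : ℝ) := Real.sqrt_pos.2 hk'
  have hQ0 : 0 ≤ Q 0 := sum_nonneg fun t _ => sq_nonneg (c t)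
  have hp0 : 0 ≤ p 0 := sum_nonneg fun t _ => hc0 t
  have hp1 : 0 ≤ p 1 := sum_nonneg fun t _ => hc0 t
  have hk2 : (k : ℝ) * c (2 * k) ≤ p 1 := by
    simpa [two_mul, add_mul] using hc.card_mul_le_blockSum (k := k) (j := 1)
  have hk1 : (k : ℝ) * c k ≤ p 0 := by simpa using hc.card_mul_le_blockSum (k := k) (j := 0)
  have hQ1 : Q 1 ≤ c k * p 1 := by simpa using hc.blockSum_sq_le hc0 (k := k) (j := 1)
  have hS : √(k : ℝ) * S ≤ p 0 - 3 / 4 * p 1 := by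
    have := hc.sqrt_mul_sum_sqrt_blockSum_sq_le hc0 hN (k := k)
    rw [sum_eq_sum_Ico_succ_bot (by omega)] at htail
    linarith
  have hp0Q : p 0 ≤ √(k : ℝ) * √(Q 0) := by
    rw [← Real.sqrt_mul hk'.le]
    exact Real.le_sqrt_of_sq_le sq_blockSum_le
  have hQ1p : √(k : ℝ) * Q 1 ≤ √(Q 0) * p 1 := by
    refine le_of_mul_le_mul_left ?_ hsk
    calc √(k : ℝ) * (√k * Q 1) = k * Q 1 := by rw [← mul_assoc, Real.mul_self_sqrt hk'.le]
      _ ≤ p 0 * p 1 := by nlinarith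
      _ ≤ √(k : ℝ) * (√(Q 0) * p 1) := by
          rw [← mul_assoc]; exact mul_le_mul_of_nonneg_right hp0Q hp1
  refine le_of_mul_le_mul_left ?_ hsk
  calc √(k : ℝ) * (√(Q 0) * S) = √(Q 0) * (√k * S) := by ring
    _ ≤ √(Q 0) * (p 0 - 3 / 4 * p 1) := mul_le_mul_of_nonneg_left hS (Real.sqrt_nonneg _)
    _ ≤ √(k : ℝ) * (Q 0 - 3 / 4 * Q 1) := by
        nlinarith [mul_le_mul_of_nonneg_left hp0Q (Real.sqrt_nonneg (Q 0)), Real.mul_self_sqrt hQ0]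

end Blocks

theorem Nat.div_eq_iff_mem_Ico {t k j : ℕ} (hk : 0 < k) :
    t / k = j ↔ t ∈ Ico (j * k) ((j + 1) * k) := by
  rw [Nat.div_eq_iff hk, mem_Ico, add_mul, one_mul]; omega

section Rearrangement

variable {n : ℕ} (h : Fin n → ℝ)

noncomputable def absSort : Equiv.Perm (Fin n) := Tuple.sort fun i => -|h i|

noncomputable def absRank (i : Fin n) : ℕ := (absSort h).symm i

noncomputable def sortedAbs (t : ℕ) : ℝ := if ht : t < n then |h (absSort h ⟨t, ht⟩)| else 0

theorem sortedAbs_absRank (i : Fin n) : sortedAbs h (absRank h i) = |h i| := by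
  simp [sortedAbs, absRank]

theorem absRank_injective : Function.Injective (absRank h) :=
  Fin.val_injective.comp (absSort h).symm.injective

theorem sortedAbs_nonneg : 0 ≤ sortedAbs h := fun t => by
  unfold sortedAbs; split_ifs <;> simp

theorem antitone_sortedAbs : Antitone (sortedAbs h) := by
  intro s t hst
  by_cases ht : t < n
  · have hs : s < n := hst.trans_lt ht
    have := Tuple.monotone_sort (fun i => -|h i|) (show (⟨s, hs⟩ : Fin n) ≤ ⟨t, ht⟩ from hst)
    simp only [Function.comp_apply, neg_le_neg_iff] at this
    simpa [sortedAbs, absSort, hs, ht] using this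
  · rw [sortedAbs, dif_neg ht]
    exact sortedAbs_nonneg h s

theorem sortedAbs_eq_zero {t : ℕ} (ht : t ∉ Set.range (absRank h)) : sortedAbs h t = 0 := by
  rw [sortedAbs, dif_neg]
  exact fun htn => ht ⟨absSort h ⟨t, htn⟩, by simp [absRank]⟩

theorem sum_filter_absRank_mem (I : Finset ℕ) {F : ℝ → ℝ} (hF : F 0 = 0) :
    ∑ i with absRank h i ∈ I, F |h i| = ∑ t ∈ I, F (sortedAbs h t) := by
  rw [← sum_preimage (absRank h) I (absRank_injective h).injOn _
    fun t _ ht => by rw [sortedAbs_eq_zero h ht, hF]]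
  exact sum_congr (by ext; simp) fun i _ => by rw [sortedAbs_absRank]

theorem sum_abs_le_sum_range_sortedAbs {S : Finset (Fin n)} {k : ℕ} (hS : #S ≤ k) :
    ∑ i ∈ S, |h i| ≤ ∑ t ∈ range k, sortedAbs h t := by
  calc ∑ i ∈ S, |h i| = ∑ t ∈ S.image (absRank h), sortedAbs h t := by
        rw [sum_image fun i _ j _ hij => absRank_injective h hij]
        simp [sortedAbs_absRank]
    _ ≤ _ := (antitone_sortedAbs h).sum_le_sum_range (sortedAbs_nonneg h) (card_image_le.trans hS)

noncomputable def rankBlock (k j : ℕ) : Fin n → ℝ := fun i => if absRank h i / k = j then h i else 0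

variable {h} {k : ℕ}

theorem absRank_div_lt {N : ℕ} (hN : n ≤ N) (i : Fin n) : absRank h i / k < N :=
  ((Nat.div_le_self _ _).trans_lt ((absSort h).symm i).isLt).trans_le hN

theorem sum_rankBlock {N : ℕ} (hN : n ≤ N) : ∑ j ∈ range N, rankBlock h k j = h := by
  funext i
  simp [rankBlock, Finset.sum_apply, sum_ite_eq, absRank_div_lt hN i]

theorem rankBlock_mul_rankBlock {j j' : ℕ} (hjj' : j ≠ j') (i : Fin n) :
    rankBlock h k j i * rankBlock h k j' i = 0 := by
  unfold rankBlock
  split_ifs <;> simp_all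

theorem isSparse_rankBlock (hk : 0 < k) (j : ℕ) : IsSparse k (rankBlock h k j) := by
  refine isSparse_of_card_le (S := {i | absRank h i ∈ Ico (j * k) ((j + 1) * k)}) ?_ fun i hi => ?_
  · refine (card_le_card_of_injOn (absRank h) (fun i hi => by simpa using hi)
      (absRank_injective h).injOn).trans (card_Ico_mul_add_one_mul k j).le
  · simp_all [rankBlock, Nat.div_eq_iff_mem_Ico hk]

theorem sum_comp_abs_rankBlock (hk : 0 < k) (j : ℕ) {F : ℝ → ℝ} (hF : F 0 = 0) :
    ∑ i, F |rankBlock h k j i| = blockSum (fun t => F (sortedAbs h t)) k j := by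
  rw [blockSum, ← sum_filter_absRank_mem h _ hF, sum_filter]
  refine sum_congr rfl fun i _ => ?_
  simp only [rankBlock, Nat.div_eq_iff_mem_Ico hk]
  split_ifs <;> simp [hF]

theorem dotProduct_self_rankBlock (hk : 0 < k) (j : ℕ) :
    rankBlock h k j ⬝ᵥ rankBlock h k j = blockSum (fun t => sortedAbs h t ^ 2) k j := by
  rw [← sum_comp_abs_rankBlock hk j (F := fun x => x ^ 2) (by simp)]
  simp [dotProduct, sq]

theorem sum_abs_eq_sum_blockSum (hk : 0 < k) {N : ℕ} (hN : n ≤ N) :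
    ∑ i, |h i| = ∑ j ∈ range N, blockSum (sortedAbs h) k j := by
  calc ∑ i, |h i| = ∑ i, ∑ j ∈ range N, |rankBlock h k j i| := sum_congr rfl fun i _ => by
        simp [rankBlock, apply_ite, sum_ite_eq, absRank_div_lt hN i]
    _ = ∑ j ∈ range N, blockSum (sortedAbs h) k j := by
        rw [sum_comm]
        exact sum_congr rfl fun j _ => sum_comp_abs_rankBlock hk j (F := id) rfl

end Rearrangement

-- `3(a + b)(a² - ¾b²) ≤ 3.37 a(a² + b²)` for `b ≥ 0`, and `3.4 < 1 + √6`.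
theorem mul_mul_lt_one_sub_mul_of_lt_three_div_four_add_sqrt_six {δ a b S : ℝ}
    (hδ : δ < 3 / (4 + √6)) (ha : 0 < a) (hb : 0 ≤ b) (hS : 0 ≤ S)
    (haS : a * S ≤ a ^ 2 - 3 / 4 * b ^ 2) :
    δ * (a + b) * S < (1 - δ) * (a ^ 2 + b ^ 2) := by
  have hδ' : δ * (4 + √6) < 3 := (lt_div_iff₀ (by positivity)).1 hδ
  have h6 : 2.4 ≤ √6 := Real.le_sqrt_of_sq_le (by norm_num)
  have hab : 0 < a ^ 2 + b ^ 2 := by positivity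
  rcases le_or_gt δ 0 with hδ0 | hδ0
  · nlinarith [mul_nonneg (add_nonneg ha.le hb) hS]
  have hcubic : 3 * (a + b) * (a ^ 2 - 3 / 4 * b ^ 2) ≤ 3.4 * a * (a ^ 2 + b ^ 2) := by
    nlinarith [mul_nonneg ha.le (sq_nonneg (a - 3.34 * b)), pow_nonneg hb 3,
      mul_nonneg hb (sq_nonneg (a - b))]
  refine lt_of_mul_lt_mul_left ?_ ha.le
  calc a * (δ * (a + b) * S) = δ * (a + b) * (a * S) := by ring
    _ ≤ δ * (a + b) * (a ^ 2 - 3 / 4 * b ^ 2) :=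
        mul_le_mul_of_nonneg_left haS (by positivity)
    _ ≤ δ * (3.4 / 3) * (a * (a ^ 2 + b ^ 2)) := by nlinarith
    _ < a * ((1 - δ) * (a ^ 2 + b ^ 2)) := by nlinarith [mul_pos ha hab]

theorem HasRIP.sum_abs_lt_sum_abs_compl {m n k : ℕ} {A : Matrix (Fin m) (Fin n) ℝ} {δ : ℝ}
    (hA : HasRIP A (2 * k) δ) (hδ : δ < 3 / (4 + √6)) {h : Fin n → ℝ} (hAh : A *ᵥ h = 0)
    (hh : h ≠ 0) {S : Finset (Fin n)} (hS : #S ≤ k) :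
    ∑ i ∈ S, |h i| < ∑ i ∈ Sᶜ, |h i| := by
  obtain ⟨i₀, hi₀⟩ := Function.ne_iff.1 hh
  rcases k.eq_zero_or_pos with rfl | hk
  · simpa [card_eq_zero.1 (Nat.le_zero.1 hS)] using
      sum_pos' (fun i _ => abs_nonneg (h i)) ⟨i₀, mem_univ _, abs_pos.2 hi₀⟩
  set c := sortedAbs h
  set Q := blockSum (fun t => c t ^ 2) k
  have htop : ∑ i ∈ S, |h i| ≤ blockSum c k 0 := by
    have hrange : ∑ t ∈ range k, sortedAbs h t = blockSum c k 0 := by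
      simp [c, blockSum]
    exact hrange ▸ sum_abs_le_sum_range_sortedAbs h hS
  have htotal : ∑ i ∈ S, |h i| + ∑ i ∈ Sᶜ, |h i|
      = blockSum c k 0 + ∑ j ∈ Ico 1 (n + 2), blockSum c k j := by
    rw [sum_add_sum_compl, sum_abs_eq_sum_blockSum hk (N := n + 2) (by omega), range_eq_Ico,
      sum_eq_sum_Ico_succ_bot (by omega)]
  suffices blockSum c k 0 < ∑ j ∈ Ico 1 (n + 2), blockSum c k j by linarith
  by_contra! htail
  have hQ0 : 0 < Q 0 := by
    have hc0 : 0 < c 0 := by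
      have := antitone_sortedAbs h (Nat.zero_le (absRank h i₀))
      rw [sortedAbs_absRank] at this
      exact (abs_pos.2 hi₀).trans_le this
    exact (pow_pos hc0 2).trans_le <| single_le_sum (fun t _ => sq_nonneg (c t)) (by simpa using hk)
  have hQ1 : 0 ≤ Q 1 := sum_nonneg fun t _ => sq_nonneg (c t)
  have hhead := hA.one_sub_mul_head_le (w := rankBlock h k) (isSparse_rankBlock hk)
    (fun j j' hjj' => rankBlock_mul_rankBlock hjj') (N := n + 2) (by omega)
    (by rw [sum_rankBlock (by omega), hAh])
  simp only [dotProduct_self_rankBlock hk] at hhead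
  have hseq := (antitone_sortedAbs h).sqrt_blockSum_sq_mul_sum_le (sortedAbs_nonneg h) hk
    (by omega) htail
  have := mul_mul_lt_one_sub_mul_of_lt_three_div_four_add_sqrt_six hδ (Real.sqrt_pos.2 hQ0)
    (Real.sqrt_nonneg (Q 1)) (sum_nonneg fun j _ => Real.sqrt_nonneg (Q j))
    (by rwa [Real.sq_sqrt hQ0.le, Real.sq_sqrt hQ1])
  rw [Real.sq_sqrt hQ0.le, Real.sq_sqrt hQ1] at this
  exact this.not_ge hhead

theorem sum_abs_lt_sum_abs_add {ι : Type*} [Fintype ι] [DecidableEq ι] {x h : ι → ℝ}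
    {S : Finset ι} (hx : ∀ i ∉ S, x i = 0) (hS : ∑ i ∈ S, |h i| < ∑ i ∈ Sᶜ, |h i|) :
    ∑ i, |x i| < ∑ i, |x i + h i| := by
  have hxS : ∑ i, |x i| = ∑ i ∈ S, |x i| :=
    (sum_subset (subset_univ S) fun i _ hi => by simp [hx i hi]).symm
  have hcompl : ∑ i ∈ Sᶜ, |x i + h i| = ∑ i ∈ Sᶜ, |h i| :=
    sum_congr rfl fun i hi => by simp [hx i (mem_compl.1 hi)]
  have htri : ∑ i ∈ S, |x i| ≤ ∑ i ∈ S, |x i + h i| + ∑ i ∈ S, |h i| := by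
    rw [← sum_add_distrib]
    exact sum_le_sum fun i _ => by simpa using abs_sub (x i + h i) (h i)
  rw [hxS, ← sum_add_sum_compl S (fun i => |x i + h i|), hcompl]
  linarith

theorem rip_implies_unique_l1_recovery_general
    (m n k : ℕ) (A : Matrix (Fin m) (Fin n) ℝ)
    (δ : ℝ) (hδ : δ < 3 / (4 + Real.sqrt 6))
    (hRIP : ∀ z : Fin n → ℝ, IsSparse (2 * k) z →
      (1 - δ) * (∑ i, z i ^ 2) ≤ ∑ j, (A.mulVec z j) ^ 2 ∧
      ∑ j, (A.mulVec z j) ^ 2 ≤ (1 + δ) * (∑ i, z i ^ 2))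
    (x : Fin n → ℝ) (hx : IsSparse k x)
    (b : Fin m → ℝ) (hAx : A.mulVec x = b) :
    ∀ y : Fin n → ℝ, A.mulVec y = b → y ≠ x → ∑ i, |x i| < ∑ i, |y i| := by
  intro y hAy hne
  have hA : HasRIP A (2 * k) δ := fun z hz => by simpa [dotProduct, sq] using hRIP z hz
  have hker : A *ᵥ (y - x) = 0 := by rw [mulVec_sub, hAy, hAx, sub_self]
  have hnull := hA.sum_abs_lt_sum_abs_compl hδ hker (sub_ne_zero.2 hne) hx
  have := sum_abs_lt_sum_abs_add (fun i hi => by simpa using hi) hnull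
  simpa only [Pi.sub_apply, add_sub_cancel] using this

/-- If the restricted isometry constant `δ_{2k}` of `A` is below
`3/(4+√6)`, then every `k`-sparse solution of `A x = b̂` is the unique `ℓ₁` minimizer. -/
theorem rip_implies_unique_l1_recovery
    (m n k : ℕ) (hk : 1 ≤ k) (A : Matrix (Fin m) (Fin n) ℝ)
    (δ : ℝ) (hδ : δ < 3 / (4 + Real.sqrt 6))
    (hRIP : ∀ z : Fin n → ℝ, IsSparse (2 * k) z →
      (1 - δ) * (∑ i, z i ^ 2) ≤ ∑ j, (A.mulVec z j) ^ 2 ∧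
      ∑ j, (A.mulVec z j) ^ 2 ≤ (1 + δ) * (∑ i, z i ^ 2))
    (x : Fin n → ℝ) (hx : IsSparse k x)
    (b : Fin m → ℝ) (hAx : A.mulVec x = b) :
    ∀ y : Fin n → ℝ, A.mulVec y = b → y ≠ x → ∑ i, |x i| < ∑ i, |y i| :=
  rip_implies_unique_l1_recovery_general m n k A δ hδ hRIP x hx b hAx
end

section
/- Let Θ = diag(Θ₁,…,Θₙ) be a diagonal n×n matrix with Θⱼ > 0 for all j, and let A be a real m×n matrix with m ≤ n/2. Set ρ = m/n, H = Θ⁻¹ + AᵀA and P = Θ⁻¹ + ρ Iₙ. Let C > 0 be any constant, let l = #{j : Θⱼ⁻¹ < C}, and suppose there exists 0 < δ_l < 1 such that every m×l submatrix B formed of l distinct columns of A satisfies ‖(n/m)·BᵀB − I_l‖₂ ≤ δ_l. If A has orthonormal rows, i.e. AAᵀ = I_m, then every eigenvalue λ of P⁻¹H satisfies |λ − 1| ≤ δ_l + (1/4)·(3 − ρ)²/(ρ δ_l C). -/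
open scoped BigOperators Matrix.Norms.L2Operator
open Matrix

/-- Property P2: every `m × k` submatrix `B` formed of `k` distinct columns of `A`
satisfies `‖(n/m)·BᵀB − I_k‖₂ ≤ δ` (the norm is the spectral norm). -/
def PropP2 (m n k : ℕ) (A : Matrix (Fin m) (Fin n) ℝ) (δ : ℝ) : Prop :=
  ∀ g : Fin k → Fin n, Function.Injective g →
    ‖((n : ℝ) / m) • ((A.submatrix id g)ᵀ * (A.submatrix id g)) - 1‖ ≤ δ

/-!
Writing `P⁻¹H v = λ v` as `H v = λ P v` and pairing with `v` gives
`(λ - 1) vᵀPv = ‖Av‖² - ρ‖v‖²`. Split `v = u + w`, where `u` is supported on the `l` columns with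
`Θⱼ⁻¹ < C`. Property P2 on these columns gives `|‖Au‖² - ρ‖u‖²| ≤ ρδ‖u‖²`, the orthonormal rows
give `‖Aw‖ ≤ ‖w‖`, and a weighted AM-GM on the cross term `2⟨Au, Aw⟩` bounds
`|‖Av‖² - ρ‖v‖²|` by `(δ + (3 - ρ)²/(4ρδC)) (ρ‖u‖² + C‖w‖²)`, while `vᵀPv ≥ ρ‖u‖² + C‖w‖²`
because `Θⱼ⁻¹ ≥ C` off the support of `u`.
-/

open WithLp

namespace Matrix

variable {m n ι R : Type*}

section CommSemiring

variable [CommSemiring R]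

lemma dotProduct_transpose_mul_mulVec [Fintype m] [Fintype n] (B : Matrix m n R) (w : n → R) :
    w ⬝ᵥ ((Bᵀ * B) *ᵥ w) = (B *ᵥ w) ⬝ᵥ (B *ᵥ w) := by
  rw [← mulVec_mulVec, dotProduct_mulVec, vecMul_transpose]

lemma dotProduct_diagonal_mulVec [Fintype n] [DecidableEq n] (e v : n → R) :
    v ⬝ᵥ (diagonal e *ᵥ v) = ∑ j, e j * v j ^ 2 := by
  simp only [dotProduct, mulVec_diagonal]
  exact Finset.sum_congr rfl fun j _ => by ring

lemma dotProduct_comp_of_injective [Fintype n] [Fintype ι] {g : ι → n} (hg : g.Injective)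
    (x u : n → R) (hu : ∀ j ∉ Set.range g, u j = 0) : (x ∘ g) ⬝ᵥ (u ∘ g) = x ⬝ᵥ u :=
  Fintype.sum_of_injective g hg _ _ (fun j hj => by simp [hu j hj]) fun _ => rfl

lemma submatrix_mulVec_comp_of_injective [Fintype n] [Fintype ι] {g : ι → n}
    (hg : g.Injective) (A : Matrix m n R) (u : n → R) (hu : ∀ j ∉ Set.range g, u j = 0) :
    A.submatrix id g *ᵥ (u ∘ g) = A *ᵥ u :=
  funext fun i => dotProduct_comp_of_injective hg (A i) u hu

end CommSemiring

section CommRing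

variable [CommRing R] [Fintype n] [DecidableEq n]

lemma mulVec_eq_smul_mulVec_of_nonsing_inv_mul {P H : Matrix n n R} (hP : IsUnit P.det)
    {μ : R} {v : n → R} (h : (P⁻¹ * H) *ᵥ v = μ • v) : H *ᵥ v = μ • (P *ᵥ v) := by
  have := congrArg (P *ᵥ ·) h
  simpa only [mulVec_mulVec, ← Matrix.mul_assoc, mul_nonsing_inv _ hP, Matrix.one_mul,
    mulVec_smul] using this

lemma sub_one_mul_dotProduct_mulVec_eq [Fintype m] (D : Matrix n n R) (A : Matrix m n R)
    {ρ μ : R} {v : n → R} (h : (D + Aᵀ * A) *ᵥ v = μ • ((D + ρ • 1) *ᵥ v)) :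
    (μ - 1) * (v ⬝ᵥ ((D + ρ • 1) *ᵥ v)) = (A *ᵥ v) ⬝ᵥ (A *ᵥ v) - ρ * (v ⬝ᵥ v) := by
  have h' := congrArg (v ⬝ᵥ ·) h
  simp only [add_mulVec, dotProduct_add, dotProduct_smul, smul_mulVec, one_mulVec,
    dotProduct_transpose_mul_mulVec, smul_eq_mul] at h' ⊢
  linear_combination -h'

end CommRing

end Matrix

section EuclideanNorm

variable {m n : Type*} [Fintype m] [Fintype n]

lemma dotProduct_self_eq_norm_toLp_sq (u : n → ℝ) : u ⬝ᵥ u = ‖toLp 2 u‖ ^ 2 := by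
  rw [← real_inner_self_eq_norm_sq, EuclideanSpace.inner_toLp_toLp, star_trivial]

lemma norm_toLp_sq_eq_indicator_add_compl (s : Set n) (v : n → ℝ) :
    ‖toLp 2 v‖ ^ 2 = ‖toLp 2 (s.indicator v)‖ ^ 2 + ‖toLp 2 (sᶜ.indicator v)‖ ^ 2 := by
  simp only [EuclideanSpace.real_norm_sq_eq, ← Finset.sum_add_distrib]
  refine Finset.sum_congr rfl fun j _ => ?_
  by_cases hj : j ∈ s <;> simp [hj]

lemma sum_mul_sq_pos {e v : n → ℝ} (he : ∀ j, 0 < e j) (hv : v ≠ 0) :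
    0 < ∑ j, e j * v j ^ 2 := by
  obtain ⟨j, hj⟩ := Function.ne_iff.1 hv
  exact Finset.sum_pos' (fun i _ => mul_nonneg (he i).le (sq_nonneg _))
    ⟨j, Finset.mem_univ j, mul_pos (he j) (sq_pos_of_ne_zero hj)⟩

lemma mul_norm_sq_indicator_add_mul_norm_sq_compl_le {c v : n → ℝ} {s : Set n} {ρ C : ℝ}
    (hc : ∀ j, 0 ≤ c j) (hρ : 0 ≤ ρ) (hs : ∀ j ∉ s, C ≤ c j) :
    ρ * ‖toLp 2 (s.indicator v)‖ ^ 2 + C * ‖toLp 2 (sᶜ.indicator v)‖ ^ 2 ≤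
      ∑ j, (c j + ρ) * v j ^ 2 := by
  simp only [EuclideanSpace.real_norm_sq_eq, Finset.mul_sum, ← Finset.sum_add_distrib]
  refine Finset.sum_le_sum fun j _ => ?_
  by_cases hj : j ∈ s
  · rw [Set.indicator_of_mem hj, Set.indicator_of_notMem (Set.notMem_compl_iff.2 hj)]
    nlinarith [hc j, sq_nonneg (v j)]
  · rw [Set.indicator_of_notMem hj, Set.indicator_of_mem (Set.mem_compl hj)]
    nlinarith [hs j hj, sq_nonneg (v j)]

namespace Matrix

variable [DecidableEq n]

lemma sub_one_mul_sum_eq_of_inv_mul_mulVec_eq_smul {c : n → ℝ} {ρ : ℝ}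
    (hcρ : ∀ j, c j + ρ ≠ 0) (A : Matrix m n ℝ) {μ : ℝ} {v : n → ℝ}
    (h : ((diagonal c + ρ • 1)⁻¹ * (diagonal c + Aᵀ * A)) *ᵥ v = μ • v) :
    (μ - 1) * ∑ j, (c j + ρ) * v j ^ 2 = ‖toLp 2 (A *ᵥ v)‖ ^ 2 - ρ * ‖toLp 2 v‖ ^ 2 := by
  have hP : diagonal c + ρ • 1 = diagonal fun j => c j + ρ := by
    rw [smul_one_eq_diagonal, diagonal_add]
  have hdet : IsUnit (diagonal c + ρ • 1).det := by
    rw [hP, det_diagonal]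
    exact (Finset.prod_ne_zero_iff.2 fun j _ => hcρ j).isUnit
  rw [← dotProduct_diagonal_mulVec, ← hP, ← dotProduct_self_eq_norm_toLp_sq,
    ← dotProduct_self_eq_norm_toLp_sq]
  exact sub_one_mul_dotProduct_mulVec_eq _ A (mulVec_eq_smul_mulVec_of_nonsing_inv_mul hdet h)

lemma l2_opNorm_one_le [DecidableEq m] {𝕜 : Type*} [RCLike 𝕜] : ‖(1 : Matrix m m 𝕜)‖ ≤ 1 := by
  rw [← diagonal_one, l2_opNorm_diagonal]
  exact (pi_norm_le_iff_of_nonneg zero_le_one).2 fun _ => by simp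

lemma l2_opNorm_le_one_of_mul_conjTranspose_eq_one [DecidableEq m] {𝕜 : Type*} [RCLike 𝕜]
    {A : Matrix m n 𝕜} (h : A * Aᴴ = 1) : ‖A‖ ≤ 1 := by
  have : ‖A‖ * ‖A‖ ≤ 1 := by
    rw [← l2_opNorm_conjTranspose, ← l2_opNorm_conjTranspose_mul_self,
      conjTranspose_conjTranspose, h]
    exact l2_opNorm_one_le
  nlinarith [norm_nonneg A]

lemma norm_toLp_mulVec_le_of_mul_transpose_eq_one [DecidableEq m] {A : Matrix m n ℝ}
    (h : A * Aᵀ = 1) (u : n → ℝ) : ‖toLp 2 (A *ᵥ u)‖ ≤ ‖toLp 2 u‖ := by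
  rw [← conjTranspose_eq_transpose_of_trivial] at h
  exact (A.l2_opNorm_mulVec _).trans
    (mul_le_of_le_one_left (norm_nonneg _) (l2_opNorm_le_one_of_mul_conjTranspose_eq_one h))

lemma abs_dotProduct_mulVec_le (M : Matrix n n ℝ) (u : n → ℝ) :
    |u ⬝ᵥ (M *ᵥ u)| ≤ ‖M‖ * ‖toLp 2 u‖ ^ 2 := by
  have h := abs_real_inner_le_norm (toLp 2 (M *ᵥ u)) (toLp 2 u)
  rw [EuclideanSpace.inner_toLp_toLp, star_trivial] at h
  calc |u ⬝ᵥ (M *ᵥ u)| ≤ ‖toLp 2 (M *ᵥ u)‖ * ‖toLp 2 u‖ := h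
    _ ≤ ‖M‖ * ‖toLp 2 u‖ * ‖toLp 2 u‖ := by gcongr; exact M.l2_opNorm_mulVec _
    _ = ‖M‖ * ‖toLp 2 u‖ ^ 2 := by ring

end Matrix

end EuclideanNorm

lemma PropP2.abs_norm_sq_sub_mul_norm_sq_le {m n k : ℕ} {A : Matrix (Fin m) (Fin n) ℝ} {δ : ℝ}
    (hA : PropP2 m n k A δ) (hm : m ≠ 0) (hn : n ≠ 0) {S : Finset (Fin n)} (hS : S.card = k)
    {u : Fin n → ℝ} (hu : ∀ j ∉ S, u j = 0) :
    |‖toLp 2 (A *ᵥ u)‖ ^ 2 - m / n * ‖toLp 2 u‖ ^ 2| ≤ m / n * δ * ‖toLp 2 u‖ ^ 2 := by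
  set g := S.orderEmbOfFin hS
  have hu' : ∀ j ∉ Set.range g, u j = 0 := by
    simpa only [g, Finset.range_orderEmbOfFin, Finset.mem_coe] using hu
  have hq := abs_dotProduct_mulVec_le
    ((n / m : ℝ) • ((A.submatrix id g)ᵀ * A.submatrix id g) - 1) (u ∘ g)
  rw [sub_mulVec, one_mulVec, smul_mulVec, dotProduct_sub, dotProduct_smul,
    dotProduct_transpose_mul_mulVec, ← dotProduct_self_eq_norm_toLp_sq (u ∘ g),
    submatrix_mulVec_comp_of_injective g.injective A u hu',
    dotProduct_comp_of_injective g.injective u u hu', dotProduct_self_eq_norm_toLp_sq,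
    dotProduct_self_eq_norm_toLp_sq, smul_eq_mul] at hq
  have hmn : (m / n : ℝ) * (n / m) = 1 := by field_simp
  rw [show ‖toLp 2 (A *ᵥ u)‖ ^ 2 - m / n * ‖toLp 2 u‖ ^ 2 =
      m / n * ((n / m : ℝ) * ‖toLp 2 (A *ᵥ u)‖ ^ 2 - ‖toLp 2 u‖ ^ 2) by
    linear_combination -‖toLp 2 (A *ᵥ u)‖ ^ 2 * hmn, abs_mul, abs_of_nonneg (by positivity),
    mul_assoc]
  gcongr
  exact hq.trans (mul_le_mul_of_nonneg_right (hA g g.injective) (sq_nonneg _))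

lemma abs_norm_add_sq_sub_le {E : Type*} [NormedAddCommGroup E] [InnerProductSpace ℝ E]
    {x y : E} {α β ε b : ℝ} (hx : |‖x‖ ^ 2 - α| ≤ ε) (hy : ‖y‖ ≤ b) (hβ0 : 0 ≤ β)
    (hβb : β ≤ b ^ 2) : |‖x + y‖ ^ 2 - (α + β)| ≤ ε + 2 * ‖x‖ * ‖y‖ + b ^ 2 := by
  have hxy := abs_le.1 (abs_real_inner_le_norm x y)
  have hy2 : ‖y‖ ^ 2 ≤ b ^ 2 := pow_le_pow_left₀ (norm_nonneg y) hy 2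
  rw [norm_add_sq_real]
  rw [abs_le] at hx ⊢
  constructor <;> nlinarith [norm_nonneg y]

lemma mul_sq_add_two_mul_add_sq_le {ρ δ C a b p q : ℝ} (hρ0 : 0 < ρ) (hρ : ρ ≤ 1 / 2)
    (hδ0 : 0 < δ) (hδ1 : δ ≤ 1) (hC : 0 < C) (hpa : p ^ 2 ≤ ρ * (1 + δ) * a ^ 2) (hq : 0 ≤ q)
    (hqb : q ≤ b) :
    ρ * δ * a ^ 2 + 2 * p * q + b ^ 2 ≤
      (δ + 1 / 4 * (3 - ρ) ^ 2 / (ρ * δ * C)) * (ρ * a ^ 2 + C * b ^ 2) := by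
  set K := 1 / 4 * (3 - ρ) ^ 2 / (ρ * δ * C)
  have hK0 : 0 < K := div_pos (by nlinarith) (by positivity)
  have hKρδC : K * (ρ * δ * C) = 1 / 4 * (3 - ρ) ^ 2 := div_mul_cancel₀ _ (by positivity)
  -- weighted AM-GM `2 p q ≤ t p ^ 2 + q ^ 2 / t` with `t = K / (1 + δ)`
  have hamgm : 2 * p * q ≤ K * ρ * a ^ 2 + (1 + δ) / K * q ^ 2 := by
    have hsq : 0 ≤ (K * p - (1 + δ) * q) ^ 2 / (K * (1 + δ)) := by positivity
    have hexp : (K * p - (1 + δ) * q) ^ 2 / (K * (1 + δ)) =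
        K / (1 + δ) * p ^ 2 + (1 + δ) / K * q ^ 2 - 2 * p * q := by
      field_simp; ring
    have hp : K / (1 + δ) * p ^ 2 ≤ K * ρ * a ^ 2 := by
      rw [div_mul_eq_mul_div, div_le_iff₀ (by positivity)]
      nlinarith
    linarith
  have hδCK : 1 + δ ≤ δ * C * K := le_of_mul_le_mul_left (by nlinarith) hρ0
  have hKC : 1 ≤ K * C := le_of_mul_le_mul_left (by nlinarith) (mul_pos hρ0 hδ0)
  have hq2 : (1 + δ) / K * q ^ 2 ≤ δ * C * b ^ 2 := by
    rw [div_mul_eq_mul_div, div_le_iff₀ hK0]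
    nlinarith [pow_le_pow_left₀ hq hqb 2]
  nlinarith [mul_le_mul_of_nonneg_right hKC (sq_nonneg b)]

lemma abs_norm_add_sq_sub_le_mul {E : Type*} [NormedAddCommGroup E] [InnerProductSpace ℝ E]
    {x y : E} {ρ δ C a b : ℝ} (hρ0 : 0 < ρ) (hρ : ρ ≤ 1 / 2) (hδ0 : 0 < δ) (hδ1 : δ ≤ 1)
    (hC : 0 < C) (hx : |‖x‖ ^ 2 - ρ * a ^ 2| ≤ ρ * δ * a ^ 2) (hy : ‖y‖ ≤ b) :
    |‖x + y‖ ^ 2 - (ρ * a ^ 2 + ρ * b ^ 2)| ≤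
      (δ + 1 / 4 * (3 - ρ) ^ 2 / (ρ * δ * C)) * (ρ * a ^ 2 + C * b ^ 2) :=
  (abs_norm_add_sq_sub_le hx hy (by positivity)
    (mul_le_of_le_one_left (sq_nonneg b) (by linarith))).trans
    (mul_sq_add_two_mul_add_sq_le hρ0 hρ hδ0 hδ1 hC (by linarith [(abs_le.1 hx).2])
      (norm_nonneg y) hy)

/-- Eigenvalue clustering of the preconditioned matrix `P⁻¹H` around 1
when `A` has orthonormal rows, where `H = Θ⁻¹ + AᵀA` and `P = Θ⁻¹ + ρ Iₙ`, `ρ = m/n`. -/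
theorem eigenvalue_clustering_orthonormal_rows
    (m n : ℕ) (hmn : 2 * m ≤ n)
    (d : Fin n → ℝ) (hd : ∀ j, 0 < d j)
    (A : Matrix (Fin m) (Fin n) ℝ)
    (C : ℝ) (hC : 0 < C)
    (l : ℕ) (hl : l = (Finset.univ.filter fun j => (d j)⁻¹ < C).card)
    (δl : ℝ) (hδl0 : 0 < δl) (hδl1 : δl < 1)
    (hP2 : PropP2 m n l A δl)
    (hortho : A * Aᵀ = 1) :
    ∀ lam : ℝ,
      (∃ v : Fin n → ℝ, v ≠ 0 ∧
        ((Matrix.diagonal (fun j => (d j)⁻¹) + ((m : ℝ) / n) • (1 : Matrix (Fin n) (Fin n) ℝ))⁻¹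
          * (Matrix.diagonal (fun j => (d j)⁻¹) + Aᵀ * A)).mulVec v = lam • v) →
      |lam - 1| ≤ δl + (1 / 4) * (3 - (m : ℝ) / n) ^ 2 / (((m : ℝ) / n) * δl * C) := by
  rintro μ ⟨v, hv, heig⟩
  have hpos : ∀ j, 0 < (d j)⁻¹ + m / n := fun j => by have := hd j; positivity
  set q := ∑ j, ((d j)⁻¹ + m / n) * v j ^ 2
  have hq : 0 < q := sum_mul_sq_pos hpos hv
  have hrayleigh := sub_one_mul_sum_eq_of_inv_mul_mulVec_eq_smul (fun j => (hpos j).ne') A heig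
  rcases Nat.eq_zero_or_pos m with rfl | hm
  · -- the right-hand side collapses to `δl` since `x / 0 = 0`, and indeed `μ = 1`
    rw [Subsingleton.elim (toLp 2 (A *ᵥ v)) 0] at hrayleigh
    have h0 : (μ - 1) * q = 0 := by rw [hrayleigh]; simp
    have hμ : μ - 1 = 0 := (mul_eq_zero.1 h0).resolve_right hq.ne'
    simp [hμ, hδl0.le]
  have hn : n ≠ 0 := by omega
  have hρ0 : (0 : ℝ) < m / n := by positivity
  have hρ : (m / n : ℝ) ≤ 1 / 2 := by
    rw [div_le_iff₀ (by positivity)]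
    linarith [show (2 * m : ℝ) ≤ n by exact_mod_cast hmn]
  set S := Finset.univ.filter fun j => (d j)⁻¹ < C
  set u := (S : Set (Fin n)).indicator v with hu
  set w := (S : Set (Fin n))ᶜ.indicator v with hw
  have hAu := hP2.abs_norm_sq_sub_mul_norm_sq_le hm.ne' hn hl.symm (u := u)
    fun j hj => Set.indicator_of_notMem (Finset.mem_coe.not.2 hj) v
  have hAw := norm_toLp_mulVec_le_of_mul_transpose_eq_one hortho w
  have hq_low : m / n * ‖toLp 2 u‖ ^ 2 + C * ‖toLp 2 w‖ ^ 2 ≤ q :=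
    mul_norm_sq_indicator_add_mul_norm_sq_compl_le (fun j => (inv_pos.2 (hd j)).le) hρ0.le
      fun j hj => by simpa [S] using hj
  refine le_of_mul_le_mul_right ?_ hq
  calc |μ - 1| * q
      = |‖toLp 2 (A *ᵥ u) + toLp 2 (A *ᵥ w)‖ ^ 2 -
          (m / n * ‖toLp 2 u‖ ^ 2 + m / n * ‖toLp 2 w‖ ^ 2)| := by
        rw [← abs_of_pos hq, ← abs_mul, hrayleigh, ← toLp_add, ← mulVec_add, hu, hw,
          Set.indicator_self_add_compl, norm_toLp_sq_eq_indicator_add_compl (S : Set (Fin n)),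
          mul_add]
    _ ≤ _ := abs_norm_add_sq_sub_le_mul hρ0 hρ hδl0 hδl1.le hC hAu hAw
    _ ≤ _ := by gcongr
end

section
/- Let C > ρ > 0, δ > 0 and ξ > 0. Then for every α ∈ [0,1], ρ δ α + ξ √(1−α) ≤ (δ + ξ²/(4ρδC))·(ρ α + C(1−α)). -/
/-- The key scalar inequality for the eigenvalue clustering bound:
for `C > ρ > 0`, `δ > 0`, `ξ > 0` and every `α ∈ [0,1]`,
`ρδα + ξ√(1−α) ≤ (δ + ξ²/(4ρδC))·(ρα + C(1−α))`. -/
theorem clustering_scalar_inequality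
    (C ρ δ ξ : ℝ) (hρ : 0 < ρ) (hC : ρ < C) (hδ : 0 < δ) (hξ : 0 < ξ) :
    ∀ α : ℝ, 0 ≤ α → α ≤ 1 →
      ρ * δ * α + ξ * Real.sqrt (1 - α) ≤
        (δ + ξ ^ 2 / (4 * ρ * δ * C)) * (ρ * α + C * (1 - α)) := by
  intro α hα0 hα1
  set s := Real.sqrt (1 - α) with hs
  have hs0 : 0 ≤ s := Real.sqrt_nonneg _
  have hs2 : s ^ 2 = 1 - α := Real.sq_sqrt (by linarith)
  have hC0 : 0 < C := hρ.trans hC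
  have h1mα : (0:ℝ) ≤ 1 - α := by linarith
  have key : ξ * s ≤ δ * C * s ^ 2 + ξ ^ 2 / (4 * δ * C) := by
    have h := sq_nonneg (2 * δ * C * s - ξ)
    have hdc : 0 < 4 * δ * C := by positivity
    have ht : ξ ^ 2 / (4 * δ * C) * (4 * δ * C) = ξ ^ 2 := div_mul_cancel₀ _ (ne_of_gt hdc)
    nlinarith [h, ht, hdc]
  have hsplit : ξ ^ 2 / (4 * δ * C) ≤ ξ ^ 2 / (4 * ρ * δ * C) * (ρ * α + C * (1 - α)) - δ * C * (1 - α) * 0 := by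
    have h1 : ξ ^ 2 / (4 * ρ * δ * C) * (ρ * α) = ξ ^ 2 * α / (4 * δ * C) := by
      field_simp
    have h2 : ξ ^ 2 / (4 * ρ * δ * C) * (C * (1 - α)) = ξ ^ 2 * (1 - α) * C / (4 * ρ * δ * C) := by ring
    have h3 : ξ ^ 2 * (1 - α) / (4 * δ * C) ≤ ξ ^ 2 * (1 - α) * C / (4 * ρ * δ * C) := by
      rw [div_le_div_iff₀ (by positivity) (by positivity)]
      nlinarith [mul_nonneg (mul_nonneg (mul_nonneg (sq_nonneg ξ) h1mα) (by linarith : (0:ℝ) ≤ C - ρ)) (by positivity : (0:ℝ) ≤ 4 * δ * C)]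
    have : ξ ^ 2 / (4 * δ * C) = ξ ^ 2 * α / (4 * δ * C) + ξ ^ 2 * (1 - α) / (4 * δ * C) := by ring
    rw [this, mul_add, h1]
    linarith
  have expand : (δ + ξ ^ 2 / (4 * ρ * δ * C)) * (ρ * α + C * (1 - α)) =
      δ * ρ * α + δ * C * (1 - α) + ξ ^ 2 / (4 * ρ * δ * C) * (ρ * α + C * (1 - α)) := by ring
  rw [expand, hs2] at *
  linarith [key, hsplit]
end

section
/- Let Θ_u, Θ_v be diagonal n×n matrices with positive diagonal entries, A a real m×n matrix and ρ > 0. Define the 2n×2n block matrices H = [[Θ_u⁻¹ + AᵀA, −AᵀA],[−AᵀA, Θ_v⁻¹ + AᵀA]] and P = [[Θ_u⁻¹ + ρIₙ, −ρIₙ],[−ρIₙ, Θ_v⁻¹ + ρIₙ]]. Then H − P = [[M, −M],[−M, M]] with M = AᵀA − ρIₙ has rank at most n, and consequently 1 is an eigenvalue of P⁻¹H of multiplicity at least n. -/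
/-!
Both `H` and `P` have the form `[[D₁ + B, -B], [-B, D₂ + B]]` with the same diagonal parts and
coupling blocks `AᵀA` and `ρ Iₙ`, so their difference is `[[M, -M], [-M, M]]` with
`M = AᵀA - ρ Iₙ`. That matrix factors as `[M; -M] · [Iₙ, -Iₙ]` through an `n`-dimensional space,
so its rank is at most `n`, and rank–nullity leaves a kernel of dimension at least `2n - n = n`.
-/

open Matrix

namespace Matrix

variable {m n R : Type*}

theorem fromBlocks_coupled_sub_fromBlocks_coupled [AddCommGroup R] (D₁ D₂ B C : Matrix n n R) :
    fromBlocks (D₁ + B) (-B) (-B) (D₂ + B) - fromBlocks (D₁ + C) (-C) (-C) (D₂ + C) =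
      fromBlocks (B - C) (-(B - C)) (-(B - C)) (B - C) := by
  rw [sub_eq_add_neg, fromBlocks_neg, fromBlocks_add]
  congr 1 <;> abel

variable [Fintype n]

theorem rank_add_finrank_ker_mulVecLin {K : Type*} [Field K] (A : Matrix m n K) :
    A.rank + Module.finrank K (LinearMap.ker A.mulVecLin) = Fintype.card n :=
  (LinearMap.finrank_range_add_finrank_ker A.mulVecLin).trans
    (Module.finrank_fintype_fun_eq_card K)

variable [DecidableEq n]

theorem fromBlocks_neg_neg_eq_fromRows_mul_fromCols [Ring R] (M : Matrix n n R) :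
    fromBlocks M (-M) (-M) M = fromRows M (-M) * fromCols (1 : Matrix n n R) (-1) := by
  simp

theorem rank_fromBlocks_neg_neg_le [CommRing R] [StrongRankCondition R] (M : Matrix n n R) :
    (fromBlocks M (-M) (-M) M).rank ≤ Fintype.card n := by
  rw [fromBlocks_neg_neg_eq_fromRows_mul_fromCols]
  exact (rank_mul_le_left _ _).trans (rank_le_card_width _)

end Matrix

theorem block_difference_rank_and_unit_eigenvalue_general
    (m n : ℕ) (du dv : Fin n → ℝ)
    (A : Matrix (Fin m) (Fin n) ℝ) (ρ : ℝ) :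
    let M : Matrix (Fin n) (Fin n) ℝ := Aᵀ * A - ρ • (1 : Matrix (Fin n) (Fin n) ℝ)
    let H : Matrix (Fin n ⊕ Fin n) (Fin n ⊕ Fin n) ℝ :=
      Matrix.fromBlocks (Matrix.diagonal (fun j => (du j)⁻¹) + Aᵀ * A) (-(Aᵀ * A))
        (-(Aᵀ * A)) (Matrix.diagonal (fun j => (dv j)⁻¹) + Aᵀ * A)
    let P : Matrix (Fin n ⊕ Fin n) (Fin n ⊕ Fin n) ℝ :=
      Matrix.fromBlocks
        (Matrix.diagonal (fun j => (du j)⁻¹) + ρ • (1 : Matrix (Fin n) (Fin n) ℝ))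
        (-(ρ • (1 : Matrix (Fin n) (Fin n) ℝ)))
        (-(ρ • (1 : Matrix (Fin n) (Fin n) ℝ)))
        (Matrix.diagonal (fun j => (dv j)⁻¹) + ρ • (1 : Matrix (Fin n) (Fin n) ℝ))
    H - P = Matrix.fromBlocks M (-M) (-M) M ∧
    (H - P).rank ≤ n ∧
    n ≤ Module.finrank ℝ ↥(LinearMap.ker (H - P).mulVecLin) := by
  intro M H P
  have hdiff : H - P = fromBlocks M (-M) (-M) M :=
    fromBlocks_coupled_sub_fromBlocks_coupled _ _ _ _
  have hrank : (H - P).rank ≤ n := by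
    simpa [hdiff] using rank_fromBlocks_neg_neg_le M
  have hnullity := rank_add_finrank_ker_mulVecLin (H - P)
  simp only [Fintype.card_sum, Fintype.card_fin] at hnullity
  exact ⟨hdiff, hrank, by omega⟩

/-- For the block matrices `H` and `P` of the matrix-free IPM,
`H − P = [[M, −M],[−M, M]]` with `M = AᵀA − ρIₙ`, it has rank at most `n`, and
consequently `1` is an eigenvalue of `P⁻¹H` of multiplicity at least `n`
(the kernel of `H − P` has dimension at least `n`). -/
theorem block_difference_rank_and_unit_eigenvalue
    (m n : ℕ) (du dv : Fin n → ℝ) (hdu : ∀ j, 0 < du j) (hdv : ∀ j, 0 < dv j)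
    (A : Matrix (Fin m) (Fin n) ℝ) (ρ : ℝ) (hρ : 0 < ρ) :
    let M : Matrix (Fin n) (Fin n) ℝ := Aᵀ * A - ρ • (1 : Matrix (Fin n) (Fin n) ℝ)
    let H : Matrix (Fin n ⊕ Fin n) (Fin n ⊕ Fin n) ℝ :=
      Matrix.fromBlocks (Matrix.diagonal (fun j => (du j)⁻¹) + Aᵀ * A) (-(Aᵀ * A))
        (-(Aᵀ * A)) (Matrix.diagonal (fun j => (dv j)⁻¹) + Aᵀ * A)
    let P : Matrix (Fin n ⊕ Fin n) (Fin n ⊕ Fin n) ℝ :=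
      Matrix.fromBlocks
        (Matrix.diagonal (fun j => (du j)⁻¹) + ρ • (1 : Matrix (Fin n) (Fin n) ℝ))
        (-(ρ • (1 : Matrix (Fin n) (Fin n) ℝ)))
        (-(ρ • (1 : Matrix (Fin n) (Fin n) ℝ)))
        (Matrix.diagonal (fun j => (dv j)⁻¹) + ρ • (1 : Matrix (Fin n) (Fin n) ℝ))
    H - P = Matrix.fromBlocks M (-M) (-M) M ∧
    (H - P).rank ≤ n ∧
    n ≤ Module.finrank ℝ ↥(LinearMap.ker (H - P).mulVecLin) :=
  block_difference_rank_and_unit_eigenvalue_general m n du dv A ρ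
end

section
/- Let Θ_u, Θ_v be diagonal n×n matrices with positive diagonal entries, let A be a real m×n matrix with orthonormal rows (AAᵀ = I_m) and m ≤ n/2, and set ρ = m/n. Define the 2n×2n block matrices H = [[Θ_u⁻¹ + AᵀA, −AᵀA],[−AᵀA, Θ_v⁻¹ + AᵀA]] and P = [[Θ_u⁻¹ + ρIₙ, −ρIₙ],[−ρIₙ, Θ_v⁻¹ + ρIₙ]]. Let Θ = Θ_u + Θ_v, let C > 0, let l = #{j : Θⱼ⁻¹ < C}, and suppose there exists 0 < δ_l < 1 such that every m×l submatrix B formed of l distinct columns of A satisfies ‖(n/m)·BᵀB − I_l‖₂ ≤ δ_l. Then every eigenvalue λ of P⁻¹H either equals 1 or satisfies |λ − 1| ≤ δ_l + (1/4)·(3 − ρ)²/(ρ δ_l C). -/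
open scoped BigOperators Matrix.Norms.L2Operator
open Matrix

/-!
For `λ ≠ 1`, adding the two block rows of `H v = λ P v` forces `Θ_u⁻¹ x = -Θ_v⁻¹ y`, so
`w = x - y ≠ 0` solves the reduced problem `(Θ⁻¹ + AᵀA) w = λ (Θ⁻¹ + ρ I) w`. Pairing with `w`,
`(λ - 1) (wᵀΘ⁻¹w + ρ‖w‖²) = ‖Aw‖² - ρ‖w‖²`. Split `w = w_S + w_T` along `S = {j | Θⱼ⁻¹ < C}`:
property P2 puts `‖A w_S‖²` within `ρ δ ‖w_S‖²` of `ρ ‖w_S‖²`, orthonormal rows give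
`‖A w_T‖² ≤ ‖w_T‖²`, the cross term is bounded by Cauchy–Schwarz and AM–GM with weight
`(3 - ρ)² / (4 δ C)`, and `wᵀΘ⁻¹w ≥ C ‖w_T‖²` bounds the denominator from below.
-/

section DotProduct

variable {ι κ : Type*} [Fintype ι] [Fintype κ]

theorem dotProduct_sq_le_dotProduct_self_mul (x y : ι → ℝ) :
    (x ⬝ᵥ y) ^ 2 ≤ (x ⬝ᵥ x) * (y ⬝ᵥ y) := by
  have := real_inner_mul_inner_self_le (WithLp.toLp 2 x) (WithLp.toLp 2 y)
  simp only [EuclideanSpace.inner_toLp_toLp, star_trivial, dotProduct_comm y x] at this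
  rwa [sq]

theorem dotProduct_mulVec_self_le_of_mul_transpose_eq_one [DecidableEq κ] {A : Matrix κ ι ℝ}
    (hA : A * Aᵀ = 1) (u : ι → ℝ) : (A *ᵥ u) ⬝ᵥ (A *ᵥ u) ≤ u ⬝ᵥ u := by
  set p := Aᵀ *ᵥ (A *ᵥ u)
  have hup : u ⬝ᵥ p = (A *ᵥ u) ⬝ᵥ (A *ᵥ u) := by
    rw [dotProduct_mulVec, vecMul_transpose]
  have hpp : p ⬝ᵥ p = (A *ᵥ u) ⬝ᵥ (A *ᵥ u) := by
    rw [dotProduct_comm, dotProduct_mulVec, vecMul_transpose, mulVec_mulVec, hA, one_mulVec]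
  have := dotProduct_self_star_nonneg (u - p)
  simp only [star_trivial, sub_dotProduct, dotProduct_sub, dotProduct_comm p u, hup, hpp] at this
  linarith

theorem abs_dotProduct_mulVec_le_l2_opNorm [DecidableEq ι] (M : Matrix ι ι ℝ) (c : ι → ℝ) :
    |c ⬝ᵥ (M *ᵥ c)| ≤ ‖M‖ * (c ⬝ᵥ c) := by
  set x := WithLp.toLp 2 c
  have hx : ‖x‖ ^ 2 = c ⬝ᵥ c := by
    rw [← real_inner_self_eq_norm_sq, EuclideanSpace.inner_toLp_toLp, star_trivial]
  calc |c ⬝ᵥ (M *ᵥ c)| = |inner ℝ x (WithLp.toLp 2 (M *ᵥ c))| := by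
        rw [EuclideanSpace.inner_toLp_toLp, star_trivial, dotProduct_comm]
    _ ≤ ‖x‖ * ‖WithLp.toLp 2 (M *ᵥ c)‖ := abs_real_inner_le_norm _ _
    _ ≤ ‖x‖ * (‖M‖ * ‖x‖) := by gcongr; exact M.l2_opNorm_mulVec x
    _ = ‖M‖ * (c ⬝ᵥ c) := by rw [← hx]; ring

theorem dotProduct_self_eq_indicator_add_indicator_compl (S : Set ι) (w : ι → ℝ) :
    w ⬝ᵥ w = S.indicator w ⬝ᵥ S.indicator w + Sᶜ.indicator w ⬝ᵥ Sᶜ.indicator w := by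
  classical
  simp only [dotProduct, ← Finset.sum_add_distrib, Set.indicator_apply, Set.mem_compl_iff]
  exact Finset.sum_congr rfl fun j _ => by split_ifs <;> ring

theorem mul_dotProduct_indicator_compl_le [DecidableEq ι] {d : ι → ℝ}
    (hd : ∀ j, 0 ≤ d j) {C : ℝ} {S : Set ι} (hS : ∀ j ∉ S, C ≤ d j) (w : ι → ℝ) :
    C * (Sᶜ.indicator w ⬝ᵥ Sᶜ.indicator w) ≤ w ⬝ᵥ (diagonal d *ᵥ w) := by
  classical
  simp only [dotProduct, mulVec_diagonal, Finset.mul_sum, Set.indicator_apply, Set.mem_compl_iff]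
  refine Finset.sum_le_sum fun j _ => ?_
  split_ifs with hj
  · nlinarith [mul_nonneg (hd j) (mul_self_nonneg (w j))]
  · nlinarith [mul_le_mul_of_nonneg_right (hS j hj) (mul_self_nonneg (w j))]

theorem dotProduct_mulVec_sub_eq_of_add_mulVec_eq_smul {R : Type*} [CommRing R]
    {D M N : Matrix ι ι R} {w : ι → R} {μ : R}
    (h : (D + M) *ᵥ w = μ • ((D + N) *ᵥ w)) :
    w ⬝ᵥ (M *ᵥ w) - w ⬝ᵥ (N *ᵥ w) = (μ - 1) * (w ⬝ᵥ (D *ᵥ w) + w ⬝ᵥ (N *ᵥ w)) := by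
  have := congrArg (w ⬝ᵥ ·) h
  simp only [add_mulVec, dotProduct_add, dotProduct_smul, smul_eq_mul] at this
  linear_combination this

end DotProduct

theorem Finset.sum_orderEmbOfFin_eq_sum {α β : Type*} [LinearOrder α] [Fintype α]
    [AddCommMonoid β] (S : Finset α) {k : ℕ} (h : S.card = k) {f : α → β}
    (hf : ∀ j ∉ S, f j = 0) : ∑ i, f (S.orderEmbOfFin h i) = ∑ j, f j := by
  rw [← Finset.sum_subset (Finset.subset_univ S) fun j _ hj => hf j hj]
  simpa using (Finset.sum_map Finset.univ (S.orderEmbOfFin h).toEmbedding f).symm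

section CoupledBlocks

variable {ι : Type*} [Fintype ι] [DecidableEq ι]

-- `H = coupledBlocks Θ_u⁻¹ Θ_v⁻¹ (AᵀA)` and `P = coupledBlocks Θ_u⁻¹ Θ_v⁻¹ (ρ I)`.
def coupledBlocks (d₁ d₂ : ι → ℝ) (M : Matrix ι ι ℝ) : Matrix (ι ⊕ ι) (ι ⊕ ι) ℝ :=
  fromBlocks (diagonal d₁ + M) (-M) (-M) (diagonal d₂ + M)

namespace coupledBlocks

variable (d₁ d₂ : ι → ℝ) (M : Matrix ι ι ℝ)

theorem mulVec_inl (v : ι ⊕ ι → ℝ) (j : ι) :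
    (coupledBlocks d₁ d₂ M *ᵥ v) (.inl j) =
      d₁ j * v (.inl j) + (M *ᵥ (v ∘ .inl - v ∘ .inr)) j := by
  simp only [coupledBlocks, fromBlocks_mulVec, add_mulVec, neg_mulVec, mulVec_sub, mulVec_diagonal,
    Sum.elim_inl, Pi.add_apply, Pi.neg_apply, Pi.sub_apply, Function.comp_apply]
  ring

theorem mulVec_inr (v : ι ⊕ ι → ℝ) (j : ι) :
    (coupledBlocks d₁ d₂ M *ᵥ v) (.inr j) =
      d₂ j * v (.inr j) - (M *ᵥ (v ∘ .inl - v ∘ .inr)) j := by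
  simp only [coupledBlocks, fromBlocks_mulVec, add_mulVec, neg_mulVec, mulVec_sub, mulVec_diagonal,
    Sum.elim_inr, Pi.add_apply, Pi.neg_apply, Pi.sub_apply, Function.comp_apply]
  ring

theorem dotProduct_mulVec (v : ι ⊕ ι → ℝ) :
    v ⬝ᵥ (coupledBlocks d₁ d₂ M *ᵥ v) =
      v ⬝ᵥ (diagonal (Sum.elim d₁ d₂) *ᵥ v) +
        (v ∘ .inl - v ∘ .inr) ⬝ᵥ (M *ᵥ (v ∘ .inl - v ∘ .inr)) := by
  simp only [dotProduct, Fintype.sum_sum_type, mulVec_inl, mulVec_inr, mulVec_diagonal,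
    Sum.elim_inl, Sum.elim_inr, Pi.sub_apply, Function.comp_apply, ← Finset.sum_add_distrib]
  exact Finset.sum_congr rfl fun j _ => by ring

theorem posDef (hd₁ : ∀ j, 0 < d₁ j) (hd₂ : ∀ j, 0 < d₂ j) (hM : M.PosSemidef) :
    (coupledBlocks d₁ d₂ M).PosDef := by
  have hMt : Mᵀ = M := (isHermitian_iff_isSymm.mp hM.isHermitian).eq
  refine .of_dotProduct_mulVec_pos ?_ fun v hv => ?_
  · exact .fromBlocks (isHermitian_diagonal d₁ |>.add hM.isHermitian) (by simp [hMt])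
      (isHermitian_diagonal d₂ |>.add hM.isHermitian)
  · have hdiag := (PosDef.diagonal (d := Sum.elim d₁ d₂)
      (by rintro (j | j) <;> simp [hd₁, hd₂])).dotProduct_mulVec_pos hv
    have hw := hM.dotProduct_mulVec_nonneg (v ∘ .inl - v ∘ .inr)
    rw [star_trivial] at hdiag hw ⊢
    rw [dotProduct_mulVec]
    linarith

theorem exists_reduced_eigenvector {a b : ι → ℝ} (ha : ∀ j, 0 < a j) (hb : ∀ j, 0 < b j)
    {M N : Matrix ι ι ℝ} {v : ι ⊕ ι → ℝ} (hv : v ≠ 0) {μ : ℝ} (hμ : μ ≠ 1)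
    (h : coupledBlocks (a⁻¹) (b⁻¹) M *ᵥ v = μ • (coupledBlocks (a⁻¹) (b⁻¹) N *ᵥ v)) :
    ∃ w ≠ 0, (diagonal (a + b)⁻¹ + M) *ᵥ w = μ • ((diagonal (a + b)⁻¹ + N) *ᵥ w) := by
  set w := v ∘ .inl - v ∘ .inr
  have hl j := by simpa [mulVec_inl] using congrFun h (.inl j)
  have hr j := by simpa [mulVec_inr] using congrFun h (.inr j)
  -- the coupling terms cancel in the sum of the two block rows
  have hxy j : (b j)⁻¹ * v (.inr j) = -((a j)⁻¹ * v (.inl j)) := by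
    have : ((a j)⁻¹ * v (.inl j) + (b j)⁻¹ * v (.inr j)) * (1 - μ) = 0 := by
      linear_combination hl j + hr j
    linear_combination (mul_eq_zero.mp this).resolve_right (sub_ne_zero.mpr hμ.symm)
  have hz j : (a j + b j)⁻¹ * w j = (a j)⁻¹ * v (.inl j) := by
    have ha' := (ha j).ne'
    have hb' := (hb j).ne'
    have hab := (add_pos (ha j) (hb j)).ne'
    have hy : v (.inr j) = -(b j * (a j)⁻¹ * v (.inl j)) := by
      have := hxy j
      field_simp at this ⊢
      linear_combination this
    simp only [w, Pi.sub_apply, Function.comp_apply, hy]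
    field_simp
    ring
  refine ⟨w, fun hw => hv ?_, ?_⟩
  · have hx j : v (.inl j) = 0 := by
      simpa [hw, (ha j).ne'] using (hz j).symm
    ext (j | j)
    · exact hx j
    · simpa [hx j, (hb j).ne'] using hxy j
  · ext j
    simpa [add_mulVec, mulVec_diagonal, hz] using hl j

end coupledBlocks

end CoupledBlocks

noncomputable def clusterBound (ρ δ C : ℝ) : ℝ :=
  δ + 1 / 4 * (3 - ρ) ^ 2 / (ρ * δ * C)

theorem two_mul_abs_le_of_sq_le {c k s t α : ℝ} (hc : c ^ 2 ≤ k * s * t) (hk : 0 ≤ k)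
    (hs : 0 ≤ s) (ht : 0 ≤ t) (hα : 0 < α) : 2 * |c| ≤ α * s + k / α * t := by
  have hsq : (α * s + k / α * t) ^ 2 = (α * s - k / α * t) ^ 2 + 4 * k * s * t := by
    field_simp
    ring
  have h := abs_le_of_sq_le_sq (a := 2 * c) (b := α * s + k / α * t)
    (by nlinarith [sq_nonneg (α * s - k / α * t)]) (by positivity)
  rwa [abs_mul, abs_two] at h

theorem clusterBound_mul_eq {ρ δ C : ℝ} (hρ : 0 < ρ) (hδ : 0 < δ) (hC : 0 < C) :
    clusterBound ρ δ C * ρ = ρ * δ + (3 - ρ) ^ 2 / (4 * δ * C) := by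
  unfold clusterBound
  field_simp

theorem le_clusterBound_mul {ρ δ C : ℝ} (hρ : 0 < ρ) (hρ' : ρ ≤ 1 / 2) (hδ : 0 < δ)
    (hδ' : δ < 1) (hC : 0 < C) :
    1 + ρ * (1 + δ) / ((3 - ρ) ^ 2 / (4 * δ * C)) ≤ clusterBound ρ δ C * C := by
  have h3 : 25 / 4 ≤ (3 - ρ) ^ 2 := by nlinarith
  have hone : 1 ≤ 1 / 4 * (3 - ρ) ^ 2 / (ρ * δ) := by
    rw [le_div_iff₀ (by positivity)]
    nlinarith [mul_pos hρ hδ]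
  have hcross : ρ * (1 + δ) / ((3 - ρ) ^ 2 / (4 * δ * C)) ≤ δ * C := by
    rw [div_div_eq_mul_div, div_le_iff₀ (by positivity)]
    have : ρ * (1 + δ) * 4 ≤ (3 - ρ) ^ 2 := by nlinarith
    nlinarith [mul_pos hδ hC]
  have hsplit : clusterBound ρ δ C * C = δ * C + 1 / 4 * (3 - ρ) ^ 2 / (ρ * δ) := by
    unfold clusterBound
    field_simp
  linarith

namespace PropP2

variable {m n l : ℕ} {A : Matrix (Fin m) (Fin n) ℝ} {δ : ℝ}

theorem abs_dotProduct_mulVec_sub_le (hA : PropP2 m n l A δ) (hm : m ≠ 0) (hn : n ≠ 0)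
    {S : Finset (Fin n)} (hS : S.card = l) {w : Fin n → ℝ} (hw : ∀ j ∉ S, w j = 0) :
    |(A *ᵥ w) ⬝ᵥ (A *ᵥ w) - (m / n) * (w ⬝ᵥ w)| ≤ (m / n) * δ * (w ⬝ᵥ w) := by
  set g := S.orderEmbOfFin hS
  set B := A.submatrix id g
  set c := w ∘ g
  have hBc : B *ᵥ c = A *ᵥ w := by
    ext i
    exact S.sum_orderEmbOfFin_eq_sum hS (f := fun j => A i j * w j) fun j hj => by simp [hw j hj]
  have hcc : c ⬝ᵥ c = w ⬝ᵥ w :=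
    S.sum_orderEmbOfFin_eq_sum hS (f := fun j => w j * w j) fun j hj => by simp [hw j hj]
  have hB : |(n / m : ℝ) * ((A *ᵥ w) ⬝ᵥ (A *ᵥ w)) - w ⬝ᵥ w| ≤ δ * (w ⬝ᵥ w) := by
    have hquad := abs_dotProduct_mulVec_le_l2_opNorm ((n / m : ℝ) • (Bᵀ * B) - 1) c
    rw [sub_mulVec, one_mulVec, smul_mulVec, ← mulVec_mulVec, dotProduct_sub, dotProduct_smul,
      dotProduct_mulVec, vecMul_transpose, hBc, hcc, smul_eq_mul] at hquad
    exact hquad.trans (mul_le_mul_of_nonneg_right (hA g g.injective)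
      (by simpa using dotProduct_self_star_nonneg w))
  have hρ : (m / n : ℝ) * (n / m) = 1 := by field_simp
  calc |(A *ᵥ w) ⬝ᵥ (A *ᵥ w) - (m / n) * (w ⬝ᵥ w)|
      = (m / n) * |(n / m : ℝ) * ((A *ᵥ w) ⬝ᵥ (A *ᵥ w)) - w ⬝ᵥ w| := by
        rw [← abs_of_nonneg (by positivity : (0 : ℝ) ≤ m / n), ← abs_mul,
          abs_of_nonneg (by positivity : (0 : ℝ) ≤ m / n), mul_sub, ← mul_assoc, hρ, one_mul]
    _ ≤ (m / n) * (δ * (w ⬝ᵥ w)) := by gcongr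
    _ = (m / n) * δ * (w ⬝ᵥ w) := by ring

theorem abs_dotProduct_mulVec_sub_le_indicator (hP2 : PropP2 m n l A δ) (hmn : m ≤ n)
    (hm : m ≠ 0) (hA : A * Aᵀ = 1) (hδ : 0 ≤ δ) {α : ℝ} (hα : 0 < α) {S : Finset (Fin n)}
    (hS : S.card = l) (w : Fin n → ℝ) :
    let u := (S : Set (Fin n)).indicator w
    let v := (S : Set (Fin n))ᶜ.indicator w
    |(A *ᵥ w) ⬝ᵥ (A *ᵥ w) - (m / n) * (w ⬝ᵥ w)| ≤
      ((m / n) * δ + α) * (u ⬝ᵥ u) + (1 + (m / n) * (1 + δ) / α) * (v ⬝ᵥ v) := by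
  intro u v
  set ρ : ℝ := m / n
  have hρ0 : 0 ≤ ρ := by positivity
  have hρ1 : ρ ≤ 1 := div_le_one_of_le₀ (by exact_mod_cast hmn) (by positivity)
  have hAw : A *ᵥ w = A *ᵥ u + A *ᵥ v := by
    rw [← mulVec_add, Set.indicator_self_add_compl]
  have hww := dotProduct_self_eq_indicator_add_indicator_compl (S : Set (Fin n)) w
  have hu := hP2.abs_dotProduct_mulVec_sub_le hm (by omega) hS (w := u)
    fun j hj => Set.indicator_of_notMem (by simpa using hj) w
  have hv := dotProduct_mulVec_self_le_of_mul_transpose_eq_one hA v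
  have huu : 0 ≤ u ⬝ᵥ u := by simpa using dotProduct_self_star_nonneg u
  have hvv : 0 ≤ (A *ᵥ v) ⬝ᵥ (A *ᵥ v) := by simpa using dotProduct_self_star_nonneg (A *ᵥ v)
  have hcross : 2 * |(A *ᵥ u) ⬝ᵥ (A *ᵥ v)| ≤ α * (u ⬝ᵥ u) + ρ * (1 + δ) / α * (v ⬝ᵥ v) := by
    refine two_mul_abs_le_of_sq_le ?_ (by positivity) huu (hvv.trans hv) hα
    calc ((A *ᵥ u) ⬝ᵥ (A *ᵥ v)) ^ 2
        ≤ ((A *ᵥ u) ⬝ᵥ (A *ᵥ u)) * ((A *ᵥ v) ⬝ᵥ (A *ᵥ v)) :=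
          dotProduct_sq_le_dotProduct_self_mul _ _
      _ ≤ (ρ * (1 + δ) * (u ⬝ᵥ u)) * (v ⬝ᵥ v) := by
          gcongr
          linarith [le_abs_self ((A *ᵥ u) ⬝ᵥ (A *ᵥ u) - ρ * (u ⬝ᵥ u))]
  have hexp : (A *ᵥ w) ⬝ᵥ (A *ᵥ w) = (A *ᵥ u) ⬝ᵥ (A *ᵥ u) + 2 * ((A *ᵥ u) ⬝ᵥ (A *ᵥ v)) +
      (A *ᵥ v) ⬝ᵥ (A *ᵥ v) := by
    rw [hAw, add_dotProduct, dotProduct_add, dotProduct_add, dotProduct_comm (A *ᵥ v) (A *ᵥ u)]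
    ring
  have hρv : ρ * (v ⬝ᵥ v) ≤ v ⬝ᵥ v := mul_le_of_le_one_left (hvv.trans hv) hρ1
  rw [hexp, hww, abs_le]
  rw [abs_le] at hu
  constructor <;> linarith [le_abs_self ((A *ᵥ u) ⬝ᵥ (A *ᵥ v)),
    neg_abs_le ((A *ᵥ u) ⬝ᵥ (A *ᵥ v)), mul_nonneg hρ0 (hvv.trans hv)]

theorem abs_dotProduct_mulVec_sub_le_clusterBound (hP2 : PropP2 m n l A δ) (hmn : 2 * m ≤ n)
    (hA : A * Aᵀ = 1) {d : Fin n → ℝ} (hd : ∀ j, 0 ≤ d j) {C : ℝ} (hC : 0 < C)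
    (hl : l = (Finset.univ.filter fun j => d j < C).card) (hδ0 : 0 < δ) (hδ1 : δ < 1)
    (w : Fin n → ℝ) :
    |(A *ᵥ w) ⬝ᵥ (A *ᵥ w) - (m / n) * (w ⬝ᵥ w)| ≤
      clusterBound (m / n) δ C * (w ⬝ᵥ (diagonal d *ᵥ w) + (m / n) * (w ⬝ᵥ w)) := by
  set ρ : ℝ := m / n
  set S := Finset.univ.filter fun j => d j < C
  set u := (S : Set (Fin n)).indicator w
  set v := (S : Set (Fin n))ᶜ.indicator w
  have hden : C * (v ⬝ᵥ v) ≤ w ⬝ᵥ (diagonal d *ᵥ w) :=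
    mul_dotProduct_indicator_compl_le hd (fun j hj => by simpa [S] using hj) w
  have hvv : 0 ≤ v ⬝ᵥ v := by simpa using dotProduct_self_star_nonneg v
  have hww : w ⬝ᵥ w = u ⬝ᵥ u + v ⬝ᵥ v :=
    dotProduct_self_eq_indicator_add_indicator_compl (S : Set (Fin n)) w
  rcases Nat.eq_zero_or_pos m with rfl | hm
  · simp only [empty_mulVec, dotProduct_of_isEmpty, CharP.cast_eq_zero, zero_div, zero_mul,
      sub_self, abs_zero, clusterBound, one_div, sub_zero, div_zero, add_zero, ρ]
    exact mul_nonneg hδ0.le ((mul_nonneg hC.le hvv).trans hden)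
  have hm' : (0 : ℝ) < m := by exact_mod_cast hm
  have hmn' : (2 * m : ℝ) ≤ n := by exact_mod_cast hmn
  have hρ0 : 0 < ρ := div_pos hm' (by linarith)
  have hρ : ρ ≤ 1 / 2 := by
    rw [div_le_iff₀ (by linarith)]
    linarith
  have hμ : 0 ≤ clusterBound ρ δ C := by unfold clusterBound; positivity
  -- the AM–GM weight that makes the coefficient of `u ⬝ᵥ u` exactly `clusterBound ρ δ C * ρ`
  have hα : 0 < (3 - ρ) ^ 2 / (4 * δ * C) := div_pos (by nlinarith) (by positivity)
  calc |(A *ᵥ w) ⬝ᵥ (A *ᵥ w) - ρ * (w ⬝ᵥ w)|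
      ≤ (ρ * δ + (3 - ρ) ^ 2 / (4 * δ * C)) * (u ⬝ᵥ u) +
          (1 + ρ * (1 + δ) / ((3 - ρ) ^ 2 / (4 * δ * C))) * (v ⬝ᵥ v) :=
        hP2.abs_dotProduct_mulVec_sub_le_indicator (by omega) hm.ne' hA hδ0.le hα hl.symm w
    _ ≤ clusterBound ρ δ C * ρ * (u ⬝ᵥ u) + clusterBound ρ δ C * C * (v ⬝ᵥ v) := by
        rw [clusterBound_mul_eq hρ0 hδ0 hC]
        gcongr
        exact le_clusterBound_mul hρ0 hρ hδ0 hδ1 hC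
    _ ≤ clusterBound ρ δ C * (w ⬝ᵥ (diagonal d *ᵥ w) + ρ * (w ⬝ᵥ w)) := by
        rw [mul_assoc _ ρ, mul_assoc _ C, ← mul_add]
        exact mul_le_mul_of_nonneg_left (by nlinarith) hμ

end PropP2

/-- Eigenvalue clustering for the `2n × 2n` block preconditioned
matrix `P⁻¹H`: every eigenvalue either equals 1 or lies within
`δ_l + (1/4)(3−ρ)²/(ρ δ_l C)` of 1, where `ρ = m/n`, `Θ = Θ_u + Θ_v` and `A` has
orthonormal rows. -/
theorem block_eigenvalue_clustering
    (m n : ℕ) (hmn : 2 * m ≤ n)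
    (du dv : Fin n → ℝ) (hdu : ∀ j, 0 < du j) (hdv : ∀ j, 0 < dv j)
    (A : Matrix (Fin m) (Fin n) ℝ)
    (hortho : A * Aᵀ = 1)
    (C : ℝ) (hC : 0 < C)
    (l : ℕ) (hl : l = (Finset.univ.filter fun j => (du j + dv j)⁻¹ < C).card)
    (δl : ℝ) (hδl0 : 0 < δl) (hδl1 : δl < 1)
    (hP2 : PropP2 m n l A δl) :
    let ρ : ℝ := (m : ℝ) / n
    let H : Matrix (Fin n ⊕ Fin n) (Fin n ⊕ Fin n) ℝ :=
      Matrix.fromBlocks (Matrix.diagonal (fun j => (du j)⁻¹) + Aᵀ * A) (-(Aᵀ * A))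
        (-(Aᵀ * A)) (Matrix.diagonal (fun j => (dv j)⁻¹) + Aᵀ * A)
    let P : Matrix (Fin n ⊕ Fin n) (Fin n ⊕ Fin n) ℝ :=
      Matrix.fromBlocks
        (Matrix.diagonal (fun j => (du j)⁻¹) + ρ • (1 : Matrix (Fin n) (Fin n) ℝ))
        (-(ρ • (1 : Matrix (Fin n) (Fin n) ℝ)))
        (-(ρ • (1 : Matrix (Fin n) (Fin n) ℝ)))
        (Matrix.diagonal (fun j => (dv j)⁻¹) + ρ • (1 : Matrix (Fin n) (Fin n) ℝ))
    ∀ lam : ℝ,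
      (∃ v : Fin n ⊕ Fin n → ℝ, v ≠ 0 ∧ (P⁻¹ * H).mulVec v = lam • v) →
      lam = 1 ∨ |lam - 1| ≤ δl + (1 / 4) * (3 - ρ) ^ 2 / (ρ * δl * C) := by
  intro ρ H P lam ⟨v, hv, hev⟩
  refine or_iff_not_imp_left.mpr fun hlam => ?_
  have hρ : (ρ • 1 : Matrix (Fin n) (Fin n) ℝ).PosSemidef := PosSemidef.one.smul (by positivity)
  have hP : P.PosDef := coupledBlocks.posDef _ _ _ (fun j => inv_pos.2 (hdu j))
    (fun j => inv_pos.2 (hdv j)) hρ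
  have hHv : H *ᵥ v = lam • (P *ᵥ v) := by
    rw [← mulVec_smul, ← hev, mulVec_mulVec, ← Matrix.mul_assoc,
      mul_nonsing_inv _ ((isUnit_iff_isUnit_det P).mp hP.isUnit), Matrix.one_mul]
  obtain ⟨w, hw, hwe⟩ := coupledBlocks.exists_reduced_eigenvector hdu hdv hv hlam hHv
  have hΘ : ∀ j, 0 < (du + dv)⁻¹ j := fun j => inv_pos.2 (add_pos (hdu j) (hdv j))
  have hden := ((PosDef.diagonal hΘ).add_posSemidef hρ).dotProduct_mulVec_pos hw
  have hbound := hP2.abs_dotProduct_mulVec_sub_le_clusterBound hmn hortho (fun j => (hΘ j).le) hC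
    hl hδl0 hδl1 w
  have hid := dotProduct_mulVec_sub_eq_of_add_mulVec_eq_smul hwe
  simp only [star_trivial, add_mulVec, dotProduct_add] at hden
  simp only [smul_mulVec, one_mulVec, dotProduct_smul, smul_eq_mul, ← mulVec_mulVec,
    dotProduct_mulVec w Aᵀ, vecMul_transpose] at hid hden
  rw [hid, abs_mul, abs_of_pos hden] at hbound
  exact le_of_mul_le_mul_right hbound hden
end
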